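/- arXiv:2506.23650 — 5 statements merged into one kernel-verified Lean document; each statement's English description precedes it below -/
import Mathlib

section
/- Let A and B be nonempty finite types, each with a distinguished element 0, and write e₀ for the standard basis vector of ℂ^{A×B} at index (0,0). Let U and V be unitary matrices on ℂ^{A×B} such that V·e₀ = ψ ⊗ ψ' for some unit vectors ψ ∈ ℂ^A and ψ' ∈ ℂ^B. Let |ρ⟩ = U·e₀ and let ρ_A be the reduced density matrix of |ρ⟩ on A. Let SWAP_{BB'} be the permutation unitary on ℂ^{(A×B)×(A×B)} sending the basis vector at index ((a,b),(a',b')) to the basis vector at index ((a,b'),(a',b)), and set W = (V† ⊗ I_{A×B}) · SWAP_{BB'} · (U ⊗ V). Then ∑_{(a',b') ∈ A×B} |(W (e₀ ⊗ e₀)) ((0,0),(a',b'))|² = ψ† ρ_A ψ, i.e., the squared norm of the projection of W(e₀⊗e₀) onto basis states whose first A×B component is (0,0) equals ⟨ψ|ρ_A|ψ⟩, the squared fidelity F(ρ_A, ψ)². -/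
open Matrix Kronecker Finset

noncomputable section

/-- Kronecker (tensor) product of two vectors. -/
def vecKron {I J : Type*} (x : I → ℂ) (y : J → ℂ) : I × J → ℂ := fun p => x p.1 * y p.2

/-- Reduced density matrix on `A` of a vector `v ∈ ℂ^{A×B}`. -/
def reducedA {A B : Type*} [Fintype B] (v : A × B → ℂ) : Matrix A A ℂ :=
  Matrix.of fun i i' => ∑ j, v (i, j) * star (v (i', j))

/-- The permutation unitary `SWAP_{BB'}` on `ℂ^{(A×B)×(A×B)}`, sending the basis vector at
index `((a,b),(a',b'))` to the basis vector at index `((a,b'),(a',b))`. -/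
def swapBB (A B : Type*) [DecidableEq A] [DecidableEq B] :
    Matrix ((A × B) × (A × B)) ((A × B) × (A × B)) ℂ :=
  Matrix.of fun i j => if i = ((j.1.1, j.2.2), (j.2.1, j.1.2)) then 1 else 0

/-! Since `V e₀ = ψ ⊗ ψ'`, the vector `SWAP (U e₀ ⊗ V e₀)` has entries `ρ(a, b') ψ(a') ψ'(b)`.
Applying `V† ⊗ I` and reading off the `(0,0)` block takes the inner product of its first factor
with `ψ ⊗ ψ'`: the `ψ'` parts pair up to `‖ψ'‖² = 1`, leaving the product vector
`ψ ⊗ (⟨ψ| ⊗ I)|ρ⟩`. Its squared norm is `‖(⟨ψ| ⊗ I)|ρ⟩‖² = ⟨ψ|ρ_A|ψ⟩`. -/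

/-- The partial inner product `(⟨ψ| ⊗ I) v`. -/
def partialBra {A B : Type*} [Fintype A] (ψ : A → ℂ) (v : A × B → ℂ) : B → ℂ :=
  fun b => ∑ a, star (ψ a) * v (a, b)

lemma kronecker_mulVec_vecKron {A B C D : Type*} [Fintype B] [Fintype D]
    (M : Matrix A B ℂ) (N : Matrix C D ℂ) (x : B → ℂ) (y : D → ℂ) :
    (M ⊗ₖ N) *ᵥ vecKron x y = vecKron (M *ᵥ x) (N *ᵥ y) := by
  funext p
  simp only [mulVec, vecKron, dotProduct, kroneckerMap_apply, Fintype.sum_prod_type,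
    Finset.sum_mul_sum]
  exact Finset.sum_congr rfl fun _ _ => Finset.sum_congr rfl fun _ _ => by ring

lemma swapBB_mulVec_apply {A B : Type*} [Fintype A] [Fintype B] [DecidableEq A] [DecidableEq B]
    (w : (A × B) × (A × B) → ℂ) (p : (A × B) × (A × B)) :
    (swapBB A B *ᵥ w) p = w ((p.1.1, p.2.2), (p.2.1, p.1.2)) := by
  simp only [mulVec, swapBB, dotProduct, of_apply, ite_mul, one_mul, zero_mul]
  rw [Finset.sum_eq_single ((p.1.1, p.2.2), (p.2.1, p.1.2)) (fun j _ hj => if_neg ?_) (by simp)]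
  · simp
  · rintro rfl
    exact hj rfl

lemma conjTranspose_kronecker_one_mulVec_apply {I J K : Type*} [Fintype I] [Fintype J]
    [DecidableEq J] (V : Matrix I K ℂ) (w : I × J → ℂ) (k : K) (q : J) :
    ((Vᴴ ⊗ₖ (1 : Matrix J J ℂ)) *ᵥ w) (k, q) = ∑ p, star (V p k) * w (p, q) := by
  simp [mulVec, dotProduct, one_apply, Fintype.sum_prod_type]

lemma sum_star_mul_self {I : Type*} [Fintype I] (x : I → ℂ) :
    ∑ i, star (x i) * x i = ((∑ i, ‖x i‖ ^ 2 : ℝ) : ℂ) := by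
  push_cast
  exact Finset.sum_congr rfl fun i _ => Complex.conj_mul' (x i)

lemma sum_norm_sq_vecKron {A B : Type*} [Fintype A] [Fintype B] (x : A → ℂ) (y : B → ℂ) :
    ∑ p, ‖vecKron x y p‖ ^ 2 = (∑ a, ‖x a‖ ^ 2) * ∑ b, ‖y b‖ ^ 2 := by
  simp [vecKron, Fintype.sum_prod_type, Finset.sum_mul_sum, mul_pow]

lemma sum_star_vecKron_mul_swapped {A B : Type*} [Fintype A] [Fintype B]
    (ψ : A → ℂ) (ψ' : B → ℂ) (hψ' : ∑ b, ‖ψ' b‖ ^ 2 = 1) (r : A × B → ℂ) (q : A × B) :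
    ∑ p, star (vecKron ψ ψ' p) * (r (p.1, q.2) * vecKron ψ ψ' (q.1, p.2))
      = vecKron ψ (partialBra ψ r) q := by
  have hψ'_normSq : ∑ b, star (ψ' b) * ψ' b = 1 := by rw [sum_star_mul_self, hψ', Complex.ofReal_one]
  calc ∑ p, star (vecKron ψ ψ' p) * (r (p.1, q.2) * vecKron ψ ψ' (q.1, p.2))
      = ψ q.1 * ((∑ a, star (ψ a) * r (a, q.2)) * ∑ b, star (ψ' b) * ψ' b) := by
        rw [Finset.sum_mul_sum, Finset.mul_sum]
        simp only [vecKron, Fintype.sum_prod_type, star_mul', Finset.mul_sum]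
        exact Finset.sum_congr rfl fun _ _ => Finset.sum_congr rfl fun _ _ => by ring
    _ = vecKron ψ (partialBra ψ r) q := by rw [hψ'_normSq, mul_one]; rfl

lemma star_dotProduct_reducedA_mulVec {A B : Type*} [Fintype A] [Fintype B]
    (ψ : A → ℂ) (v : A × B → ℂ) :
    star ψ ⬝ᵥ (reducedA v *ᵥ ψ) = ((∑ b, ‖partialBra ψ v b‖ ^ 2 : ℝ) : ℂ) := by
  rw [← sum_star_mul_self (partialBra ψ v)]
  simp only [dotProduct, reducedA, mulVec, of_apply, Pi.star_apply, partialBra, star_sum,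
    star_mul', star_star, Finset.mul_sum, Finset.sum_mul]
  conv_rhs => rw [Finset.sum_comm]; enter [2, a]; rw [Finset.sum_comm]
  exact Finset.sum_congr rfl fun _ _ => Finset.sum_congr rfl fun _ _ =>
    Finset.sum_congr rfl fun _ _ => by ring

theorem stmt0_general {A B : Type*} [Fintype A] [Fintype B] [DecidableEq A] [DecidableEq B]
    [Zero A] [Zero B]
    (U V : Matrix (A × B) (A × B) ℂ)
    (ψ : A → ℂ) (ψ' : B → ℂ)
    (hψ : ∑ a, ‖ψ a‖ ^ 2 = 1) (hψ' : ∑ b, ‖ψ' b‖ ^ 2 = 1)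
    (e0 : A × B → ℂ) (he0 : e0 = fun p => if p = ((0 : A), (0 : B)) then 1 else 0)
    (hVe0 : V *ᵥ e0 = vecKron ψ ψ')
    (W : Matrix ((A × B) × (A × B)) ((A × B) × (A × B)) ℂ)
    (hW : W = (Vᴴ ⊗ₖ (1 : Matrix (A × B) (A × B) ℂ)) * swapBB A B * (U ⊗ₖ V)) :
    ((∑ p : A × B, ‖(W *ᵥ vecKron e0 e0) ((((0 : A), (0 : B))), p)‖ ^ 2 : ℝ) : ℂ)
      = star ψ ⬝ᵥ (reducedA (U *ᵥ e0) *ᵥ ψ) := by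
  have hcol : ∀ p, V p (0, 0) = vecKron ψ ψ' p := by
    have he0_single : e0 = Pi.single (0, 0) 1 := by rw [he0]; funext p; simp [Pi.single_apply]
    rw [← hVe0, he0_single, mulVec_single_one]
    exact fun _ => rfl
  have hblock : ∀ q, (W *ᵥ vecKron e0 e0) ((0, 0), q) = vecKron ψ (partialBra ψ (U *ᵥ e0)) q := by
    intro q
    rw [hW, ← mulVec_mulVec, ← mulVec_mulVec, kronecker_mulVec_vecKron, hVe0,
      conjTranspose_kronecker_one_mulVec_apply, ← sum_star_vecKron_mul_swapped ψ ψ' hψ']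
    simp only [hcol, swapBB_mulVec_apply]
    rfl
  simp only [hblock, sum_norm_sq_vecKron, hψ, one_mul, star_dotProduct_reducedA_mulVec]

theorem stmt0 {A B : Type*} [Fintype A] [Fintype B] [DecidableEq A] [DecidableEq B]
    [Zero A] [Zero B]
    (U V : Matrix (A × B) (A × B) ℂ)
    (hU : U ∈ Matrix.unitaryGroup (A × B) ℂ) (hV : V ∈ Matrix.unitaryGroup (A × B) ℂ)
    (ψ : A → ℂ) (ψ' : B → ℂ)
    (hψ : ∑ a, ‖ψ a‖ ^ 2 = 1) (hψ' : ∑ b, ‖ψ' b‖ ^ 2 = 1)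
    (e0 : A × B → ℂ) (he0 : e0 = fun p => if p = ((0 : A), (0 : B)) then 1 else 0)
    (hVe0 : V *ᵥ e0 = vecKron ψ ψ')
    (W : Matrix ((A × B) × (A × B)) ((A × B) × (A × B)) ℂ)
    (hW : W = (Vᴴ ⊗ₖ (1 : Matrix (A × B) (A × B) ℂ)) * swapBB A B * (U ⊗ₖ V)) :
    ((∑ p : A × B, ‖(W *ᵥ vecKron e0 e0) ((((0 : A), (0 : B))), p)‖ ^ 2 : ℝ) : ℂ)
      = star ψ ⬝ᵥ (reducedA (U *ᵥ e0) *ᵥ ψ) :=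
  stmt0_general U V ψ ψ' hψ hψ' e0 he0 hVe0 W hW

end
end

section
/- Let A and B be finite types and let v ∈ ℂ^{A×B} be a vector with reduced density matrix σ_A on A. Let S be the permutation unitary on ℂ^{A×(A×B)} sending the basis vector at index (a, (a', b)) to the basis vector at index (a', (a, b)) (the swap of the two A-factors). Then for all x, y ∈ ℂ^A, the inner product ⟨x ⊗ v, S (y ⊗ v)⟩ equals ⟨x, σ_A · y⟩; equivalently, the A×A matrix with (a₁,a₂) entry ⟨e_{a₁} ⊗ v, S (e_{a₂} ⊗ v)⟩ equals σ_A. -/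
open Matrix Finset

noncomputable section

/-- The permutation unitary on `ℂ^{A×(A×B)}` swapping the two `A`-factors, sending the basis
vector at index `(a, (a', b))` to the basis vector at index `(a', (a, b))`. -/
def swapA (A B : Type*) [DecidableEq A] [DecidableEq B] :
    Matrix (A × (A × B)) (A × (A × B)) ℂ :=
  Matrix.of fun i j => if i = (j.2.1, (j.1, j.2.2)) then 1 else 0

theorem stmt2 {A B : Type*} [Fintype A] [Fintype B] [DecidableEq A] [DecidableEq B]
    (v : A × B → ℂ) :
    (∀ x y : A → ℂ,
        star (vecKron x v) ⬝ᵥ (swapA A B *ᵥ vecKron y v) = star x ⬝ᵥ (reducedA v *ᵥ y)) ∧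
    (Matrix.of fun a₁ a₂ : A =>
        star (vecKron (Pi.single a₁ (1 : ℂ)) v) ⬝ᵥ (swapA A B *ᵥ vecKron (Pi.single a₂ (1 : ℂ)) v))
      = reducedA v := by
  have hS : ∀ (w : A × (A × B) → ℂ) (i : A × (A × B)),
      (swapA A B *ᵥ w) i = w (i.2.1, (i.1, i.2.2)) := by
    intro w i
    have h : ∀ j : A × (A × B), i = (j.2.1, (j.1, j.2.2)) ↔ j = (i.2.1, (i.1, i.2.2)) := by
      rintro ⟨c, d, e⟩
      obtain ⟨a, a', b⟩ := i
      simp only [Prod.ext_iff]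
      tauto
    simp only [mulVec, dotProduct, swapA, Matrix.of_apply, h, ite_mul, one_mul, zero_mul]
    simp
  have key : ∀ x y : A → ℂ,
      star (vecKron x v) ⬝ᵥ (swapA A B *ᵥ vecKron y v) = star x ⬝ᵥ (reducedA v *ᵥ y) := by
    intro x y
    simp only [dotProduct]
    simp only [hS]
    simp only [vecKron, reducedA, mulVec, dotProduct, Matrix.of_apply,
      Pi.star_apply, star_mul', Fintype.sum_prod_type, Finset.mul_sum, Finset.sum_mul]
    refine Finset.sum_congr rfl fun a _ => Finset.sum_congr rfl fun a' _ =>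
      Finset.sum_congr rfl fun b _ => ?_
    ring
  refine ⟨key, ?_⟩
  ext a₁ a₂
  rw [Matrix.of_apply, key]
  simp [dotProduct, mulVec, Pi.single_apply, reducedA]

end
end

section
/- Let A be a nonempty finite type, let ρ be a positive semidefinite complex matrix on ℂ^A with trace 1, and let ψ ∈ ℂ^A be a unit vector. Let H = (1/√2)·[[1,1],[1,−1]] be the Hadamard matrix on ℂ², let cSWAP be the unitary on ℂ^{2×(A×A)} fixing basis vectors indexed (0,(a,a')) and sending (1,(a,a')) to (1,(a',a)), and let C = (H ⊗ I_{A×A}) · cSWAP · (H ⊗ I_{A×A}). Let P₀ = |0⟩⟨0| be the projection onto the first basis vector of ℂ². Then trace( (P₀ ⊗ I_{A×A}) · C · (P₀ ⊗ ρ ⊗ ψψ†) · C† ) = (1 + ψ†ρψ)/2; that is, the SWAP test on input ρ and ψ outputs measurement outcome 0 with probability (1 + F²(ρ,ψ))/2 where F²(ρ,ψ) = ⟨ψ|ρ|ψ⟩. -/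
/-!
Measuring the control qubit in `|0⟩` only sees the `(0,0)` block `B` of the circuit `C`. Writing
`cSWAP = |0⟩⟨0| ⊗ 1 + |1⟩⟨1| ⊗ SWAP` and conjugating by `H ⊗ 1` gives `B = (1 + SWAP) / 2`, the
projection onto the symmetric subspace, so the probability is `tr (B σ) = (tr σ + tr (SWAP σ)) / 2`
for `σ = ρ ⊗ ψψ†`. The swap trick `tr (SWAP (ρ ⊗ τ)) = tr (ρ τ)` turns the second term into
`⟨ψ|ρ|ψ⟩`, and the first one is `tr ρ · ‖ψ‖² = 1`.
-/

open Matrix Kronecker Finset ComplexOrder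

namespace Matrix

variable {ι n R : Type*}

theorem trace_single_kronecker_one_mul_mul_single_kronecker_mul_conjTranspose
    [Fintype ι] [DecidableEq ι] [Fintype n] [DecidableEq n] [CommSemiring R] [StarRing R]
    (i : ι) (M : Matrix (ι × n) (ι × n) R) (σ : Matrix n n R) :
    ((single i i 1 ⊗ₖ 1) * M * (single i i 1 ⊗ₖ σ) * Mᴴ).trace
      = (M.submatrix (i, ·) (i, ·) * σ * (M.submatrix (i, ·) (i, ·))ᴴ).trace := by
  simp [trace, mul_apply, single_apply, one_apply, Fintype.sum_prod_type, ite_and, Finset.sum_mul]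

theorem submatrix_kronecker_prodMk {m : Type*} [MulZeroClass R] (X : Matrix ι ι R)
    (N : Matrix n m R) (i j : ι) :
    (X ⊗ₖ N).submatrix (i, ·) (j, ·) = X i j • N := by
  ext
  simp

/-- `σ.permMatrix R i j = 1` iff `σ i = j`, hence `σ.symm` on the left-hand side. -/
theorem of_controlledPerm_eq [DecidableEq n] [NonAssocSemiring R] (σ : Equiv.Perm n) :
    (of fun i j => if i = (j.1, if j.1 = 0 then j.2 else σ.symm j.2) then 1 else 0 :
        Matrix (Fin 2 × n) (Fin 2 × n) R)
      = single 0 0 1 ⊗ₖ 1 + single 1 1 1 ⊗ₖ σ.permMatrix R := by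
  ext ⟨i, p⟩ ⟨j, q⟩
  fin_cases i <;> fin_cases j <;> simp [one_apply, PEquiv.toMatrix_apply, Equiv.eq_symm_apply]

theorem half_one_add_conjTranspose_mul_self [Fintype n] [DecidableEq n] [Field R] [StarRing R]
    [NeZero (2 : R)] {S : Matrix n n R} (hS : S * S = 1) (hSh : Sᴴ = S) :
    ((2 : R)⁻¹ • (1 + S))ᴴ * ((2 : R)⁻¹ • (1 + S)) = (2 : R)⁻¹ • (1 + S) := by
  rw [conjTranspose_smul, conjTranspose_add, conjTranspose_one, hSh, star_inv₀, star_ofNat,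
    smul_mul_smul]
  simp only [add_mul, mul_add, hS, one_mul, mul_one]
  match_scalars <;> field_simp <;> ring

section Swap

variable (n R) [DecidableEq n]

abbrev swapMatrix [Zero R] [One R] : Matrix (n × n) (n × n) R :=
  Equiv.Perm.permMatrix R (Equiv.prodComm n n)

variable {n R}

theorem swapMatrix_mul_self [Fintype n] [NonAssocSemiring R] :
    swapMatrix n R * swapMatrix n R = 1 := by
  rw [← permMatrix_mul]
  convert permMatrix_one
  ext <;> simp

theorem conjTranspose_swapMatrix [NonAssocSemiring R] [StarRing R] :
    (swapMatrix n R)ᴴ = swapMatrix n R := by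
  rw [conjTranspose_permMatrix]
  rfl

theorem trace_swapMatrix_mul_kronecker [Fintype n] [CommSemiring R] (ρ τ : Matrix n n R) :
    (swapMatrix n R * (ρ ⊗ₖ τ)).trace = (ρ * τ).trace := by
  rw [PEquiv.toMatrix_toPEquiv_mul]
  simp only [trace, diag, submatrix_apply, Fintype.sum_prod_type, kroneckerMap_apply, mul_apply,
    id, Equiv.prodComm_apply, Prod.fst_swap, Prod.snd_swap]
  exact Finset.sum_comm

end Swap

end Matrix

theorem stmt6_general {A : Type*} [Fintype A] [DecidableEq A]
    (ρ : Matrix A A ℂ) (hρtr : ρ.trace = 1)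
    (ψ : A → ℂ) (hψ : ∑ a, ‖ψ a‖ ^ 2 = 1)
    (H : Matrix (Fin 2) (Fin 2) ℂ)
    (hH : H = (Real.sqrt 2)⁻¹ • !![(1 : ℂ), 1; 1, -1])
    (cSWAP : Matrix (Fin 2 × (A × A)) (Fin 2 × (A × A)) ℂ)
    (hcSWAP : cSWAP = Matrix.of fun i j =>
      if i = (j.1, if j.1 = 0 then j.2 else (j.2.2, j.2.1)) then 1 else 0)
    (C : Matrix (Fin 2 × (A × A)) (Fin 2 × (A × A)) ℂ)
    (hC : C = (H ⊗ₖ (1 : Matrix (A × A) (A × A) ℂ)) * cSWAP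
        * (H ⊗ₖ (1 : Matrix (A × A) (A × A) ℂ)))
    (P0 : Matrix (Fin 2) (Fin 2) ℂ) (hP0 : P0 = !![(1 : ℂ), 0; 0, 0])
    (ψψ : Matrix A A ℂ) (hψψ : ψψ = Matrix.of fun a a' => ψ a * star (ψ a')) :
    ((P0 ⊗ₖ (1 : Matrix (A × A) (A × A) ℂ)) * C * (P0 ⊗ₖ (ρ ⊗ₖ ψψ)) * Cᴴ).trace
      = (1 + star ψ ⬝ᵥ (ρ *ᵥ ψ)) / 2 := by
  have hP0_single : P0 = single 0 0 1 := by
    rw [hP0]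
    ext i j
    fin_cases i <;> fin_cases j <;> rfl
  have hH_sq : H 0 0 * H 0 0 = 2⁻¹ ∧ H 0 1 * H 1 0 = 2⁻¹ := by
    have hs : ((√2 : ℝ) : ℂ)⁻¹ * ((√2 : ℝ) : ℂ)⁻¹ = 2⁻¹ := by
      rw [← mul_inv, ← Complex.ofReal_mul, Real.mul_self_sqrt zero_le_two, Complex.ofReal_ofNat]
    simp [hH, hs]
  have hblock : C.submatrix (0, ·) (0, ·) = (2 : ℂ)⁻¹ • (1 + swapMatrix A ℂ) := by
    simp only [hC, hcSWAP.trans (of_controlledPerm_eq (Equiv.prodComm A A)), mul_add, add_mul,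
      ← mul_kronecker_mul, one_mul, mul_one, submatrix_add, Pi.add_apply,
      submatrix_kronecker_prodMk]
    simp [mul_apply, Fin.sum_univ_two, hH_sq]
  have hψψ_vec : ψψ = vecMulVec ψ (star ψ) := hψψ
  have hψ_norm : ψ ⬝ᵥ star ψ = 1 := by
    simp only [dotProduct, Pi.star_apply, RCLike.star_def, RCLike.mul_conj]
    rw [← Complex.ofReal_one, ← hψ]
    push_cast
    rfl
  rw [hP0_single, trace_single_kronecker_one_mul_mul_single_kronecker_mul_conjTranspose, hblock,
    trace_mul_cycle,
    half_one_add_conjTranspose_mul_self swapMatrix_mul_self conjTranspose_swapMatrix,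
    smul_mul, add_mul, one_mul, trace_smul, trace_add, trace_kronecker,
    trace_swapMatrix_mul_kronecker, hψψ_vec, trace_vecMulVec, mul_vecMulVec, trace_vecMulVec,
    hρtr, hψ_norm, dotProduct_comm]
  ring

theorem stmt6 {A : Type*} [Fintype A] [DecidableEq A] [Nonempty A]
    (ρ : Matrix A A ℂ) (hρ : ρ.PosSemidef) (hρtr : ρ.trace = 1)
    (ψ : A → ℂ) (hψ : ∑ a, ‖ψ a‖ ^ 2 = 1)
    (H : Matrix (Fin 2) (Fin 2) ℂ)
    (hH : H = (Real.sqrt 2)⁻¹ • !![(1 : ℂ), 1; 1, -1])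
    (cSWAP : Matrix (Fin 2 × (A × A)) (Fin 2 × (A × A)) ℂ)
    (hcSWAP : cSWAP = Matrix.of fun i j =>
      if i = (j.1, if j.1 = 0 then j.2 else (j.2.2, j.2.1)) then 1 else 0)
    (C : Matrix (Fin 2 × (A × A)) (Fin 2 × (A × A)) ℂ)
    (hC : C = (H ⊗ₖ (1 : Matrix (A × A) (A × A) ℂ)) * cSWAP
        * (H ⊗ₖ (1 : Matrix (A × A) (A × A) ℂ)))
    (P0 : Matrix (Fin 2) (Fin 2) ℂ) (hP0 : P0 = !![(1 : ℂ), 0; 0, 0])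
    (ψψ : Matrix A A ℂ) (hψψ : ψψ = Matrix.of fun a a' => ψ a * star (ψ a')) :
    ((P0 ⊗ₖ (1 : Matrix (A × A) (A × A) ℂ)) * C * (P0 ⊗ₖ (ρ ⊗ₖ ψψ)) * Cᴴ).trace
      = (1 + star ψ ⬝ᵥ (ρ *ᵥ ψ)) / 2 :=
  stmt6_general ρ hρtr ψ hψ H hH cSWAP hcSWAP C hC P0 hP0 ψψ hψψ
end

section
/- Let p, ε be real numbers with 0 < p < 1 and 0 ≤ ε ≤ min(p, 1−p), let r and n be natural numbers with 2 ≤ r ≤ n, and define p⁺, p⁻ : Fin n → ℝ by p±(1) = p ± ε, p±(j) = (1 − p ∓ ε)/(r − 1) for 2 ≤ j ≤ r, and p±(j) = 0 for r < j ≤ n. Then p⁺ and p⁻ are probability distributions (nonnegative entries summing to 1), and their Hellinger distance satisfies d_H(p⁺, p⁻) = √(1 − √(p² − ε²) − √((1−p)² − ε²)). -/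
/-!
Both vectors are constant on the same blocks `{0}` and `{1, …, r-1}` and vanish beyond, so the
Hellinger sum collapses to one term per block. On each block
`(√x - √y)² = x + y - 2√(xy)`, and the products are `(p + ε)(p - ε) = p² - ε²` and
`(1 - p - ε)(1 - p + ε) / (r - 1)² = ((1 - p)² - ε²) / (r - 1)²`, the factor `(r - 1)`
being cancelled by the size of the second block.
-/

open Finset

namespace Real

theorem sqrt_sub_sqrt_sq {x y : ℝ} (hx : 0 ≤ x) (hy : 0 ≤ y) :
    (√x - √y) ^ 2 = x + y - 2 * √(x * y) := by
  rw [sub_sq, sq_sqrt hx, sq_sqrt hy, sqrt_mul hx]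
  ring

theorem sqrt_div_sub_sqrt_div_sq (x y : ℝ) {c : ℝ} (hc : 0 ≤ c) :
    (√(x / c) - √(y / c)) ^ 2 = (√x - √y) ^ 2 / c := by
  rw [sqrt_div' x hc, sqrt_div' y hc, div_sub_div_same, div_pow, sq_sqrt hc]

end Real

def headBlock (n r : ℕ) (a b : ℝ) : Fin n → ℝ :=
  fun j => if (j : ℕ) = 0 then a else if (j : ℕ) < r then b else 0

namespace headBlock

variable {n r : ℕ} {a b : ℝ}

theorem nonneg (ha : 0 ≤ a) (hb : 0 ≤ b) (j : Fin n) : 0 ≤ headBlock n r a b j := by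
  unfold headBlock
  split_ifs <;> first | assumption | rfl

theorem sum_eq (hr : 1 ≤ r) (hrn : r ≤ n) (a b : ℝ) :
    ∑ j, headBlock n r a b j = a + ((r : ℝ) - 1) * b := by
  unfold headBlock
  rw [Fin.sum_univ_eq_sum_range (fun i => if i = 0 then a else if i < r then b else 0),
    ← sum_range_add_sum_Ico _ hrn, range_eq_Ico, sum_eq_sum_Ico_succ_bot (by omega), if_pos rfl]
  have hblock : ∑ i ∈ Ico 1 r, (if i = 0 then a else if i < r then b else 0) = ∑ _i ∈ Ico 1 r, b :=
    sum_congr rfl fun i hi => by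
      rw [mem_Ico] at hi
      rw [if_neg (by omega), if_pos hi.2]
  have htail : ∑ i ∈ Ico r n, (if i = 0 then a else if i < r then b else 0) = 0 :=
    sum_eq_zero fun i hi => by
      rw [mem_Ico] at hi
      rw [if_neg (by omega), if_neg (by omega)]
  rw [hblock, htail, sum_const, Nat.card_Ico, nsmul_eq_mul, Nat.cast_sub hr, Nat.cast_one,
    add_zero]

theorem sum_sqrt_sub_sqrt_sq (hr : 1 ≤ r) (hrn : r ≤ n) (a b a' b' : ℝ) :
    ∑ j, (√(headBlock n r a b j) - √(headBlock n r a' b' j)) ^ 2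
      = (√a - √a') ^ 2 + ((r : ℝ) - 1) * (√b - √b') ^ 2 := by
  rw [← sum_eq hr hrn]
  refine sum_congr rfl fun j _ => ?_
  unfold headBlock
  split_ifs <;> simp

end headBlock

theorem stmt8_general (p ε : ℝ) (hε0 : 0 ≤ ε)
    (hε : ε ≤ min p (1 - p)) (r n : ℕ) (hr : 2 ≤ r) (hrn : r ≤ n)
    (pPlus pMinus : Fin n → ℝ)
    (hPlus : pPlus = fun (j : Fin n) =>
      if (j : ℕ) = 0 then p + ε
      else if (j : ℕ) < r then (1 - p - ε) / ((r : ℝ) - 1) else 0)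
    (hMinus : pMinus = fun (j : Fin n) =>
      if (j : ℕ) = 0 then p - ε
      else if (j : ℕ) < r then (1 - p + ε) / ((r : ℝ) - 1) else 0) :
    (∀ j, 0 ≤ pPlus j) ∧ (∀ j, 0 ≤ pMinus j) ∧
    (∑ j, pPlus j) = 1 ∧ (∑ j, pMinus j) = 1 ∧
    Real.sqrt (2⁻¹ * ∑ j, (Real.sqrt (pPlus j) - Real.sqrt (pMinus j)) ^ 2)
      = Real.sqrt (1 - Real.sqrt (p ^ 2 - ε ^ 2) - Real.sqrt ((1 - p) ^ 2 - ε ^ 2)) := by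
  obtain ⟨hεp, hε1p⟩ := le_min_iff.mp hε
  have hc : (0 : ℝ) < (r : ℝ) - 1 := by
    have : (2 : ℝ) ≤ r := by exact_mod_cast hr
    linarith
  have hr1 : 1 ≤ r := by omega
  change pPlus = headBlock n r _ _ at hPlus
  change pMinus = headBlock n r _ _ at hMinus
  subst hPlus hMinus
  refine ⟨headBlock.nonneg (by linarith) (div_nonneg (by linarith) hc.le),
    headBlock.nonneg (by linarith) (div_nonneg (by linarith) hc.le), ?_, ?_, ?_⟩
  · rw [headBlock.sum_eq hr1 hrn, mul_div_cancel₀ _ hc.ne']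
    ring
  · rw [headBlock.sum_eq hr1 hrn, mul_div_cancel₀ _ hc.ne']
    ring
  · rw [headBlock.sum_sqrt_sub_sqrt_sq hr1 hrn, Real.sqrt_div_sub_sqrt_div_sq _ _ hc.le,
      mul_div_cancel₀ _ hc.ne', Real.sqrt_sub_sqrt_sq (by linarith) (by linarith),
      Real.sqrt_sub_sqrt_sq (by linarith) (by linarith)]
    rw [show (p + ε) * (p - ε) = p ^ 2 - ε ^ 2 by ring,
      show (1 - p - ε) * (1 - p + ε) = (1 - p) ^ 2 - ε ^ 2 by ring]
    congr 1
    ring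

theorem stmt8 (p ε : ℝ) (hp0 : 0 < p) (hp1 : p < 1) (hε0 : 0 ≤ ε)
    (hε : ε ≤ min p (1 - p)) (r n : ℕ) (hr : 2 ≤ r) (hrn : r ≤ n)
    (pPlus pMinus : Fin n → ℝ)
    (hPlus : pPlus = fun (j : Fin n) =>
      if (j : ℕ) = 0 then p + ε
      else if (j : ℕ) < r then (1 - p - ε) / ((r : ℝ) - 1) else 0)
    (hMinus : pMinus = fun (j : Fin n) =>
      if (j : ℕ) = 0 then p - ε
      else if (j : ℕ) < r then (1 - p + ε) / ((r : ℝ) - 1) else 0) :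
    (∀ j, 0 ≤ pPlus j) ∧ (∀ j, 0 ≤ pMinus j) ∧
    (∑ j, pPlus j) = 1 ∧ (∑ j, pMinus j) = 1 ∧
    Real.sqrt (2⁻¹ * ∑ j, (Real.sqrt (pPlus j) - Real.sqrt (pMinus j)) ^ 2)
      = Real.sqrt (1 - Real.sqrt (p ^ 2 - ε ^ 2) - Real.sqrt ((1 - p) ^ 2 - ε ^ 2)) :=
  stmt8_general p ε hε0 hε r n hr hrn pPlus pMinus hPlus hMinus
end

section
/- Let p, ε be real numbers with 0 < p < 1 and 0 < ε ≤ min(p, 1−p). Then 1 − √(p² − ε²) − √((1−p)² − ε²) ≤ ε² · (1/p + 1/(1−p)), and consequently √(1 − √(p² − ε²) − √((1−p)² − ε²)) ≤ ε · √(1/p + 1/(1−p)). In particular, for fixed constant p the Hellinger distance between the distributions p⁺ and p⁻ used in the lower-bound construction is O(ε). -/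
lemma aux9 (a ε : ℝ) (ha : 0 < a) (hε0 : 0 < ε) (hε : ε ≤ a) :
    a - Real.sqrt (a ^ 2 - ε ^ 2) ≤ ε ^ 2 / a := by
  have h1 : a - ε ^ 2 / a ≤ Real.sqrt (a ^ 2 - ε ^ 2) := by
    have h2 : 0 ≤ a - ε ^ 2 / a := by
      rw [sub_nonneg, div_le_iff₀ ha]
      nlinarith
    have h3 : (a - ε ^ 2 / a) ^ 2 ≤ a ^ 2 - ε ^ 2 := by
      have : ε ^ 2 / a ≤ a := by rw [div_le_iff₀ ha]; nlinarith
      have h4 : (ε ^ 2 / a) ^ 2 ≤ ε ^ 2 := by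
        rw [div_pow, div_le_iff₀ (by positivity)]
        nlinarith [mul_le_mul hε hε hε0.le ha.le, sq_nonneg ε]
      have key : a * (ε ^ 2 / a) = ε ^ 2 := by field_simp
      nlinarith [key, h4]
    nlinarith [Real.sq_sqrt (show (0:ℝ) ≤ a ^ 2 - ε ^ 2 by nlinarith),
      Real.sqrt_nonneg (a ^ 2 - ε ^ 2)]
  linarith

theorem stmt9 (p ε : ℝ) (hp0 : 0 < p) (hp1 : p < 1) (hε0 : 0 < ε)
    (hε : ε ≤ min p (1 - p)) :
    1 - Real.sqrt (p ^ 2 - ε ^ 2) - Real.sqrt ((1 - p) ^ 2 - ε ^ 2)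
        ≤ ε ^ 2 * (1 / p + 1 / (1 - p)) ∧
    Real.sqrt (1 - Real.sqrt (p ^ 2 - ε ^ 2) - Real.sqrt ((1 - p) ^ 2 - ε ^ 2))
        ≤ ε * Real.sqrt (1 / p + 1 / (1 - p)) := by
  have hq0 : 0 < 1 - p := by linarith
  have h1 := aux9 p ε hp0 hε0 (le_trans hε (min_le_left _ _))
  have h2 := aux9 (1 - p) ε hq0 hε0 (le_trans hε (min_le_right _ _))
  have hmain : 1 - Real.sqrt (p ^ 2 - ε ^ 2) - Real.sqrt ((1 - p) ^ 2 - ε ^ 2)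
      ≤ ε ^ 2 * (1 / p + 1 / (1 - p)) := by
    have : ε ^ 2 * (1 / p + 1 / (1 - p)) = ε ^ 2 / p + ε ^ 2 / (1 - p) := by
      field_simp
    linarith
  refine ⟨hmain, ?_⟩
  calc Real.sqrt (1 - Real.sqrt (p ^ 2 - ε ^ 2) - Real.sqrt ((1 - p) ^ 2 - ε ^ 2))
      ≤ Real.sqrt (ε ^ 2 * (1 / p + 1 / (1 - p))) := Real.sqrt_le_sqrt hmain
    _ = ε * Real.sqrt (1 / p + 1 / (1 - p)) := by
        rw [Real.sqrt_mul (by positivity), Real.sqrt_sq hε0.le]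
end
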